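/- Let H = kG be the group Hopf algebra of a group G over a commutative ring k, and let ({D_g}, {α_g}, {w_{g,h}}) be an idempotent twisted partial action of G on a unital algebra A, where each D_g = 1_g A for a central idempotent 1_g, each α_g: D_{g⁻¹} → D_g is a unital algebra isomorphism, each w_{g,h} ∈ D_g D_{gh}, with 1_e = 1_A, α_e = id_A, and α_g(α_h(a 1_{h⁻¹}) 1_{g⁻¹}) w_{g,h} = w_{g,h} α_{gh}(a 1_{(gh)⁻¹}). Then the k-linear maps α: kG ⊗ A → A, g ⊗ a ↦ α_g(a 1_{g⁻¹}), and ω: kG ⊗ kG → A, g ⊗ h ↦ w_{g,h}, form a twisted partial action of kG on A. -/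

import Mathlib

/-!
Every axiom of a twisted partial action compares two expressions that are linear in each
Hopf-algebra argument once its Sweedler sums are read as a linear map evaluated at `Δ h`
(or at `Δ h` and `Δ l`). It therefore suffices to check the axioms on a basis of grouplike
elements, where `Δ (b g) = b g ⊗ b g` collapses each Sweedler sum to a single term and the
axioms become the identities defining the partial action of `G`.
-/

open TensorProduct

noncomputable section

/-- A twisted partial action `(α, ω)` of a Hopf algebra `H` on a unital
algebra `A` (Definition 2.1 of Alves–Batista–Dokuchaev–Paques).  Sweedler sums
are expressed by quantifying over arbitrary finite representations of the
comultiplication. -/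
structure TwistedPartialAction (k H A : Type) [CommRing k]
    [Ring H] [HopfAlgebra k H] [Ring A] [Algebra k A] where
  act : H →ₗ[k] A →ₗ[k] A
  cocycle : H →ₗ[k] H →ₗ[k] A
  /-- `1_H · a = a` -/
  act_one : ∀ a : A, act 1 a = a
  /-- `h · (ab) = Σ (h₁ · a)(h₂ · b)` -/
  act_mul : ∀ (h : H) (a b : A) (ι : Type) (s : Finset ι) (h1 h2 : ι → H),
    Coalgebra.comul (R := k) h = ∑ i ∈ s, h1 i ⊗ₜ[k] h2 i →
    act h (a * b) = ∑ i ∈ s, act (h1 i) a * act (h2 i) b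
  /-- `Σ (h₁ · (l₁ · a)) ω(h₂, l₂) = Σ ω(h₁, l₁)(h₂ l₂ · a)` -/
  twisted : ∀ (h l : H) (a : A) (ι κ : Type) (s : Finset ι) (t : Finset κ)
    (h1 h2 : ι → H) (l1 l2 : κ → H),
    Coalgebra.comul (R := k) h = ∑ i ∈ s, h1 i ⊗ₜ[k] h2 i →
    Coalgebra.comul (R := k) l = ∑ j ∈ t, l1 j ⊗ₜ[k] l2 j →
    ∑ i ∈ s, ∑ j ∈ t, act (h1 i) (act (l1 j) a) * cocycle (h2 i) (l2 j) =
      ∑ i ∈ s, ∑ j ∈ t, cocycle (h1 i) (l1 j) * act (h2 i * l2 j) a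
  /-- `ω(h,l) = Σ ω(h₁, l₁)(h₂ l₂ · 1)` -/
  cocycle_absorb : ∀ (h l : H) (ι κ : Type) (s : Finset ι) (t : Finset κ)
    (h1 h2 : ι → H) (l1 l2 : κ → H),
    Coalgebra.comul (R := k) h = ∑ i ∈ s, h1 i ⊗ₜ[k] h2 i →
    Coalgebra.comul (R := k) l = ∑ j ∈ t, l1 j ⊗ₜ[k] l2 j →
    cocycle h l = ∑ i ∈ s, ∑ j ∈ t, cocycle (h1 i) (l1 j) * act (h2 i * l2 j) 1

namespace TwistedPartialAction

section SweedlerSums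

variable {k H M : Type*} [CommSemiring k] [AddCommMonoid H] [Module k H] [Coalgebra k H]
  [AddCommMonoid M] [Module k M]

theorem sum_tmul_eq_comp_comul (φ : H ⊗[k] H →ₗ[k] M) {h : H} {ι : Type*} {s : Finset ι}
    {h1 h2 : ι → H} (hc : Coalgebra.comul (R := k) h = ∑ i ∈ s, h1 i ⊗ₜ[k] h2 i) :
    ∑ i ∈ s, φ (h1 i ⊗ₜ[k] h2 i) = (φ ∘ₗ Coalgebra.comul) h := by
  rw [LinearMap.comp_apply, hc, map_sum]

theorem sum_sum_tmul_eq_compl₁₂_comul (Φ : H ⊗[k] H →ₗ[k] H ⊗[k] H →ₗ[k] M) {h l : H}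
    {ι κ : Type*} {s : Finset ι} {t : Finset κ} {h1 h2 : ι → H} {l1 l2 : κ → H}
    (hc : Coalgebra.comul (R := k) h = ∑ i ∈ s, h1 i ⊗ₜ[k] h2 i)
    (hc' : Coalgebra.comul (R := k) l = ∑ j ∈ t, l1 j ⊗ₜ[k] l2 j) :
    ∑ i ∈ s, ∑ j ∈ t, Φ (h1 i ⊗ₜ[k] h2 i) (l1 j ⊗ₜ[k] l2 j) =
      Φ.compl₁₂ Coalgebra.comul Coalgebra.comul h l := by
  rw [LinearMap.compl₁₂_apply, hc, hc', map_sum Φ _ s, LinearMap.sum_apply]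
  simp only [map_sum]

end SweedlerSums

section PairMul

variable {k H A : Type*} [CommSemiring k] [AddCommMonoid H] [Module k H]
  [Semiring A] [Algebra k A]

def pairMul (P Q : H →ₗ[k] H →ₗ[k] A) : H ⊗[k] H →ₗ[k] H ⊗[k] H →ₗ[k] A :=
  TensorProduct.curry (LinearMap.mul' k A ∘ₗ TensorProduct.map (lift P) (lift Q) ∘ₗ
    (TensorProduct.tensorTensorTensorComm k H H H H).toLinearMap)

@[simp]
theorem pairMul_tmul (P Q : H →ₗ[k] H →ₗ[k] A) (x y u v : H) :
    pairMul P Q (x ⊗ₜ y) (u ⊗ₜ v) = P x u * Q y v := by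
  simp [pairMul]

end PairMul

section GroupLikeBasis

variable {k H A G : Type*} [CommSemiring k] [Semiring H] [Bialgebra k H] [Semiring A]
  [Algebra k A] (b : Module.Basis G k H)
  (act : H →ₗ[k] A →ₗ[k] A) (cocy : H →ₗ[k] H →ₗ[k] A)

theorem act_mul_of_groupLike_basis (hb : ∀ g, Coalgebra.comul (R := k) (b g) = b g ⊗ₜ[k] b g)
    (hact : ∀ g (a c : A), act (b g) (a * c) = act (b g) a * act (b g) c)
    (h : H) (a c : A) (ι : Type*) (s : Finset ι) (h1 h2 : ι → H)
    (hc : Coalgebra.comul (R := k) h = ∑ i ∈ s, h1 i ⊗ₜ[k] h2 i) :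
    act h (a * c) = ∑ i ∈ s, act (h1 i) a * act (h2 i) c := by
  let φ : H ⊗[k] H →ₗ[k] A :=
    LinearMap.mul' k A ∘ₗ TensorProduct.map (act.flip a) (act.flip c)
  have hφ : act.flip (a * c) = φ ∘ₗ Coalgebra.comul :=
    b.ext fun g => by simp [φ, hb, hact]
  calc act h (a * c) = (φ ∘ₗ Coalgebra.comul) h := by rw [← hφ, LinearMap.flip_apply]
    _ = ∑ i ∈ s, act (h1 i) a * act (h2 i) c := by
      rw [← sum_tmul_eq_comp_comul φ hc]
      simp [φ]

theorem twisted_of_groupLike_basis (hb : ∀ g, Coalgebra.comul (R := k) (b g) = b g ⊗ₜ[k] b g)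
    (hcompat : ∀ g g' (a : A),
      act (b g) (act (b g') a) * cocy (b g) (b g') = cocy (b g) (b g') * act (b g * b g') a)
    (h l : H) (a : A) (ι κ : Type*) (s : Finset ι) (t : Finset κ)
    (h1 h2 : ι → H) (l1 l2 : κ → H)
    (hc : Coalgebra.comul (R := k) h = ∑ i ∈ s, h1 i ⊗ₜ[k] h2 i)
    (hc' : Coalgebra.comul (R := k) l = ∑ j ∈ t, l1 j ⊗ₜ[k] l2 j) :
    ∑ i ∈ s, ∑ j ∈ t, act (h1 i) (act (l1 j) a) * cocy (h2 i) (l2 j) =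
      ∑ i ∈ s, ∑ j ∈ t, cocy (h1 i) (l1 j) * act (h2 i * l2 j) a := by
  let lhs := pairMul (act.compl₂ (act.flip a)) cocy
  let rhs := pairMul cocy ((LinearMap.mul k H).compr₂ (act.flip a))
  have key : lhs.compl₁₂ Coalgebra.comul Coalgebra.comul =
      rhs.compl₁₂ Coalgebra.comul Coalgebra.comul :=
    LinearMap.ext_basis b b fun g g' => by simpa [lhs, rhs, hb] using hcompat g g' a
  calc _ = ∑ i ∈ s, ∑ j ∈ t, lhs (h1 i ⊗ₜ h2 i) (l1 j ⊗ₜ l2 j) := by simp [lhs]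
    _ = rhs.compl₁₂ Coalgebra.comul Coalgebra.comul h l := by
      rw [sum_sum_tmul_eq_compl₁₂_comul lhs hc hc', key]
    _ = ∑ i ∈ s, ∑ j ∈ t, rhs (h1 i ⊗ₜ h2 i) (l1 j ⊗ₜ l2 j) :=
      (sum_sum_tmul_eq_compl₁₂_comul rhs hc hc').symm
    _ = _ := by simp [rhs]

theorem cocycle_absorb_of_groupLike_basis
    (hb : ∀ g, Coalgebra.comul (R := k) (b g) = b g ⊗ₜ[k] b g)
    (habsorb : ∀ g g', cocy (b g) (b g') = cocy (b g) (b g') * act (b g * b g') 1)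
    (h l : H) (ι κ : Type*) (s : Finset ι) (t : Finset κ) (h1 h2 : ι → H) (l1 l2 : κ → H)
    (hc : Coalgebra.comul (R := k) h = ∑ i ∈ s, h1 i ⊗ₜ[k] h2 i)
    (hc' : Coalgebra.comul (R := k) l = ∑ j ∈ t, l1 j ⊗ₜ[k] l2 j) :
    cocy h l = ∑ i ∈ s, ∑ j ∈ t, cocy (h1 i) (l1 j) * act (h2 i * l2 j) 1 := by
  let rhs := pairMul cocy ((LinearMap.mul k H).compr₂ (act.flip 1))
  have key : cocy = rhs.compl₁₂ Coalgebra.comul Coalgebra.comul :=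
    LinearMap.ext_basis b b fun g g' => by simpa [rhs, hb] using habsorb g g'
  calc cocy h l = rhs.compl₁₂ Coalgebra.comul Coalgebra.comul h l := by rw [← key]
    _ = ∑ i ∈ s, ∑ j ∈ t, rhs (h1 i ⊗ₜ h2 i) (l1 j ⊗ₜ l2 j) :=
      (sum_sum_tmul_eq_compl₁₂_comul rhs hc hc').symm
    _ = _ := by simp [rhs]

end GroupLikeBasis

end TwistedPartialAction

/-- The group algebra `kG` is presented as a Hopf algebra `H` with a basis `b` of grouplike
elements indexed by `G`; `e g` is the central idempotent `1_g` and `f g` is `a ↦ α_g(a 1_{g⁻¹})`. -/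
theorem groupTwistedPartialAction_toHopf
    {k A G H : Type} [CommRing k] [Ring A] [Algebra k A] [Group G]
    [Ring H] [HopfAlgebra k H]
    (b : Module.Basis G k H)
    (hb_mul : ∀ g g' : G, (b g : H) * b g' = b (g * g'))
    (hb_one : (b 1 : H) = 1)
    (hb_comul : ∀ g : G,
      Coalgebra.comul (R := k) (b g : H) = (b g : H) ⊗ₜ[k] (b g : H))
    (e : G → A) (f : G → A →ₗ[k] A) (w : G → G → A)
    (he_idem : ∀ g, e g * e g = e g)
    (he_central : ∀ (g : G) (a : A), e g * a = a * e g)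
    (hf_one : f 1 = LinearMap.id)
    (hf_proj : ∀ (g : G) (a : A), f g a = f g (a * e g⁻¹))
    (hf_mul : ∀ (g : G) (a a' : A), f g (a * a') = f g a * f g a')
    (hf_unital : ∀ g : G, f g (e g⁻¹) = e g)
    (hw_mem : ∀ g g' : G, w g g' = e g * (e (g * g') * w g g'))
    (hw_compat : ∀ (g g' : G) (a : A),
      f g (f g' a) * w g g' = w g g' * f (g * g') a)
    (act : H →ₗ[k] A →ₗ[k] A) (cocy : H →ₗ[k] H →ₗ[k] A)
    (hact : ∀ g : G, act (b g) = f g)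
    (hcocy : ∀ g g' : G, cocy (b g) (b g') = w g g') :
    ∃ P : TwistedPartialAction k H A, P.act = act ∧ P.cocycle = cocy := by
  have hf_apply_one (g : G) : f g 1 = e g := by rw [hf_proj, one_mul, hf_unital]
  have hw_mul_e (g g' : G) : w g g' * e (g * g') = w g g' := by
    rw [← he_central, hw_mem g g', ← mul_assoc, he_central (g * g') (e g), mul_assoc,
      ← mul_assoc (e (g * g')), he_idem]
  refine ⟨⟨act, cocy, fun a => ?_, ?_, ?_, ?_⟩, rfl, rfl⟩
  · rw [← hb_one, hact, hf_one, LinearMap.id_apply]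
  · exact TwistedPartialAction.act_mul_of_groupLike_basis b act hb_comul
      fun g a c => by rw [hact, hf_mul]
  · exact TwistedPartialAction.twisted_of_groupLike_basis b act cocy hb_comul
      fun g g' a => by rw [hact, hact, hcocy, hb_mul, hact, hw_compat]
  · exact TwistedPartialAction.cocycle_absorb_of_groupLike_basis b act cocy hb_comul
      fun g g' => by rw [hcocy, hb_mul, hact, hf_apply_one, hw_mul_e]
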